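/- Let z > 0 and ν ≥ 0 be real numbers, and set r_μ = K_{μ+1}(z)/K_μ(z) for real μ ≥ 0. For every real ε > −1, if the forward ratio recurrence r_{ν+1} = 1/r_ν + 2(ν+1)/z is evaluated at the perturbed input r_ν·(1 + ε), the resulting relative error satisfies (1/(r_ν·(1+ε)) + 2(ν+1)/z − r_{ν+1}) / r_{ν+1} = (−ε/(1+ε))·K_ν(z)/K_{ν+2}(z). -/

import Mathlib

/-!
The three-term recurrence `K_{ν+2} = K_ν + (2(ν+1)/z) K_{ν+1}` says exactly that
`r_{ν+1} = 1/r_ν + 2(ν+1)/z`, so the perturbed evaluation is off by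
`1/(r_ν(1+ε)) - 1/r_ν = -ε/((1+ε) r_ν)`, and dividing by `r_{ν+1}` leaves the factor
`1/(r_ν r_{ν+1}) = K_ν/K_{ν+2}`. The recurrence comes from
`cosh((μ+2)t) - cosh(μt) = 2 sinh t sinh((μ+1)t)` and an integration by parts
against `d/dt exp(-z cosh t) = -z sinh t exp(-z cosh t)`.
-/

open Real MeasureTheory Set Filter Topology

noncomputable def besselK (ν z : ℝ) : ℝ :=
  ∫ t in Set.Ioi (0 : ℝ), Real.exp (-z * Real.cosh t) * Real.cosh (ν * t)

namespace Real

lemma one_add_sq_div_four_le_cosh (t : ℝ) : 1 + t ^ 2 / 4 ≤ cosh t := by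
  rw [← cosh_abs, cosh_eq]
  have h₁ := quadratic_le_exp_of_nonneg (abs_nonneg t)
  have h₂ := add_one_le_exp (-|t|)
  nlinarith [sq_abs t]

lemma cosh_le_exp_abs (x : ℝ) : cosh x ≤ exp |x| := by
  rw [← cosh_abs, ← cosh_add_sinh]
  exact le_add_of_nonneg_right (sinh_nonneg_iff.2 (abs_nonneg x))

lemma abs_sinh_le_exp_abs (x : ℝ) : |sinh x| ≤ exp |x| := by
  rw [abs_sinh, ← cosh_add_sinh]
  exact le_add_of_nonneg_left (cosh_pos _).le

end Real

/-- `cosh t` grows quadratically, so `exp (-z cosh t)` beats any exponential weight. -/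
lemma integrableOn_exp_neg_mul_cosh_mul {z a : ℝ} {g : ℝ → ℝ} (hz : 0 < z) (hg : Continuous g)
    (hbound : ∀ t, |g t| ≤ exp (a * |t|)) :
    IntegrableOn (fun t => exp (-z * cosh t) * g t) (Ioi 0) := by
  refine integrable_of_isBigO_exp_neg one_pos (by fun_prop : Continuous _).continuousOn ?_
  refine Asymptotics.IsBigO.of_bound 1 ?_
  filter_upwards [eventually_ge_atTop (4 * (a + 1) / z), eventually_ge_atTop 0] with t hta ht
  have hlin : (a + 1) * t ≤ z * t ^ 2 / 4 := by
    rw [div_le_iff₀ hz] at hta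
    nlinarith
  have hexponent : -z * cosh t + a * t ≤ -1 * t := by
    nlinarith [one_add_sq_div_four_le_cosh t]
  calc ‖exp (-z * cosh t) * g t‖ = exp (-z * cosh t) * |g t| := by
        rw [norm_mul, norm_of_nonneg (exp_pos _).le, norm_eq_abs]
    _ ≤ exp (-z * cosh t) * exp (a * t) := by
        gcongr
        simpa only [abs_of_nonneg ht] using hbound t
    _ = exp (-z * cosh t + a * t) := (exp_add _ _).symm
    _ ≤ 1 * ‖exp (-1 * t)‖ := by
        rw [one_mul, norm_of_nonneg (exp_pos _).le]
        exact exp_le_exp.2 hexponent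

section

variable (μ : ℝ) {z : ℝ}

lemma integrableOn_besselK_integrand (hz : 0 < z) :
    IntegrableOn (fun t => exp (-z * cosh t) * cosh (μ * t)) (Ioi 0) :=
  integrableOn_exp_neg_mul_cosh_mul (a := |μ|) hz (by fun_prop) fun t => by
    rw [abs_of_pos (cosh_pos _), ← abs_mul]
    exact cosh_le_exp_abs _

lemma integrableOn_exp_neg_mul_cosh_mul_sinh (hz : 0 < z) :
    IntegrableOn (fun t => exp (-z * cosh t) * sinh (μ * t)) (Ioi 0) :=
  integrableOn_exp_neg_mul_cosh_mul (a := |μ|) hz (by fun_prop) fun t => by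
    rw [← abs_mul]
    exact abs_sinh_le_exp_abs _

lemma integrableOn_exp_neg_mul_cosh_mul_sinh_mul_sinh (hz : 0 < z) :
    IntegrableOn (fun t => exp (-z * cosh t) * (sinh t * sinh (μ * t))) (Ioi 0) :=
  integrableOn_exp_neg_mul_cosh_mul (a := 1 + |μ|) hz (by fun_prop) fun t => by
    rw [abs_mul, add_mul, one_mul, exp_add]
    exact mul_le_mul (abs_sinh_le_exp_abs t)
      (by simpa only [abs_mul] using abs_sinh_le_exp_abs (μ * t)) (abs_nonneg _) (exp_pos _).le

lemma besselK_pos (hz : 0 < z) : 0 < besselK μ z := by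
  rw [besselK, setIntegral_pos_iff_support_of_nonneg_ae
    (ae_of_all _ fun t => by positivity) (integrableOn_besselK_integrand μ hz)]
  have hsupport : Function.support (fun t => exp (-z * cosh t) * cosh (μ * t)) = univ :=
    Function.support_eq_univ fun t => (mul_pos (exp_pos _) (cosh_pos _)).ne'
  rw [hsupport, univ_inter, volume_Ioi]
  exact ENNReal.zero_lt_top

/-- Integration by parts: the boundary terms vanish because `sinh 0 = 0` and because
`exp (-z cosh t) sinh (μ t)` and its derivative are integrable. -/
lemma mul_integral_exp_neg_mul_cosh_mul_sinh_mul_sinh (hz : 0 < z) :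
    z * ∫ t in Ioi 0, exp (-z * cosh t) * (sinh t * sinh (μ * t)) = μ * besselK μ z := by
  set F : ℝ → ℝ := fun t => exp (-z * cosh t) * sinh (μ * t)
  have hF : ∀ t, HasDerivAt F (μ * (exp (-z * cosh t) * cosh (μ * t)) -
      z * (exp (-z * cosh t) * (sinh t * sinh (μ * t)))) t := by
    intro t
    have hexp := ((hasDerivAt_cosh t).const_mul (-z)).exp
    have hsinh := (hasDerivAt_sinh (μ * t)).comp t ((hasDerivAt_id t).const_mul μ)
    refine (hexp.mul hsinh).congr_deriv ?_
    simp only [Function.comp_apply]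
    ring
  have hF'int := ((integrableOn_besselK_integrand μ hz).const_mul μ).sub
    ((integrableOn_exp_neg_mul_cosh_mul_sinh_mul_sinh μ hz).const_mul z)
  have hFlim : Tendsto F atTop (𝓝 0) :=
    tendsto_zero_of_hasDerivAt_of_integrableOn_Ioi (fun t _ => hF t) hF'int
      (integrableOn_exp_neg_mul_cosh_mul_sinh μ hz)
  have hFTC := integral_Ioi_of_hasDerivAt_of_tendsto' (fun t _ => hF t) hF'int hFlim
  rw [integral_sub ((integrableOn_besselK_integrand μ hz).const_mul μ)
      ((integrableOn_exp_neg_mul_cosh_mul_sinh_mul_sinh μ hz).const_mul z),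
    integral_const_mul, integral_const_mul] at hFTC
  simp only [F, mul_zero, sinh_zero, sub_zero] at hFTC
  rw [besselK]
  linarith

lemma besselK_add_two (hz : 0 < z) :
    besselK (μ + 2) z = besselK μ z + 2 * (μ + 1) / z * besselK (μ + 1) z := by
  have hdiff : besselK (μ + 2) z - besselK μ z =
      2 * ∫ t in Ioi 0, exp (-z * cosh t) * (sinh t * sinh ((μ + 1) * t)) := by
    rw [besselK, besselK, ← integral_sub (integrableOn_besselK_integrand _ hz)
      (integrableOn_besselK_integrand _ hz), ← integral_const_mul]
    congr 1
    ext t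
    rw [show (μ + 2) * t = (μ + 1) * t + t by ring, show μ * t = (μ + 1) * t - t by ring,
      cosh_add, cosh_sub]
    ring
  have hibp := mul_integral_exp_neg_mul_cosh_mul_sinh_mul_sinh (μ + 1) hz
  field_simp
  linear_combination z * hdiff + 2 * hibp

end

lemma perturbed_ratio_relative_error {a b c s ε : ℝ} (hb : b ≠ 0) (hc : c ≠ 0)
    (hε : 1 + ε ≠ 0) (hrec : c = a + s * b) :
    (1 / (b / a * (1 + ε)) + s - c / b) / (c / b) = -ε / (1 + ε) * (a / c) := by
  subst hrec
  field_simp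
  ring

theorem ratio_recurrence_error_general (z ν : ℝ) (hz : 0 < z)
    (r : ℝ → ℝ) (hr : ∀ μ : ℝ, r μ = besselK (μ + 1) z / besselK μ z) :
    ∀ ε : ℝ, -1 < ε →
      (1 / (r ν * (1 + ε)) + 2 * (ν + 1) / z - r (ν + 1)) / r (ν + 1) =
        (-ε / (1 + ε)) * (besselK ν z / besselK (ν + 2) z) := by
  intro ε hε
  rw [hr ν, hr (ν + 1), show ν + 1 + 1 = ν + 2 by ring]
  exact perturbed_ratio_relative_error (besselK_pos (ν + 1) hz).ne' (besselK_pos (ν + 2) hz).ne'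
    (by linarith) (besselK_add_two ν hz)

theorem ratio_recurrence_error (z ν : ℝ) (hz : 0 < z) (hν : 0 ≤ ν)
    (r : ℝ → ℝ) (hr : ∀ μ : ℝ, r μ = besselK (μ + 1) z / besselK μ z) :
    ∀ ε : ℝ, -1 < ε →
      (1 / (r ν * (1 + ε)) + 2 * (ν + 1) / z - r (ν + 1)) / r (ν + 1) =
        (-ε / (1 + ε)) * (besselK ν z / besselK (ν + 2) z) :=
  ratio_recurrence_error_general z ν hz r hr
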